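/- Let F be a torsion-free sheaf of rank r on a smooth projective surface S, and let 0 ⊂ F₁ ⊂ F₂ ⊂ ⋯ ⊂ F_ℓ = F be a filtration with quotients E_i = F_i/F_{i-1} of positive rank. Then the discriminant satisfies Δ(F) = Σ_{i=1}^ℓ (r(E_i)/r(F)) Δ(E_i) − (1/(2r(F))) Σ_{i=2}^ℓ (r(F_i) r(F_{i-1})/r(E_i)) (μ(F_i) − μ(F_{i-1}))², where squares of divisor classes are computed with the intersection form on H²(S,ℚ). -/
import Mathlib


open Finset

private lemma tele {V : Type*} [AddCommGroup V] [Module ℚ V]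
    (B : V →ₗ[ℚ] V →ₗ[ℚ] ℚ) (hB : ∀ x y, B x y = B y x)
    (Rn ρ : ℚ) (C a : V) (hR : Rn ≠ 0) (hρ : ρ ≠ 0) (hRρ : Rn + ρ ≠ 0) :
    B a a / ρ - B (C + a) (C + a) / (Rn + ρ) + B C C / Rn
      = ((Rn + ρ) * Rn / ρ) *
          B ((Rn + ρ)⁻¹ • (C + a) - Rn⁻¹ • C) ((Rn + ρ)⁻¹ • (C + a) - Rn⁻¹ • C) := by
  have hac : B a C = B C a := hB a C
  simp only [map_add, map_sub, map_smul, LinearMap.add_apply, LinearMap.sub_apply,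
    LinearMap.smul_apply, smul_eq_mul, hac]
  field_simp
  ring

private lemma key {V : Type*} [AddCommGroup V] [Module ℚ V]
    (B : V →ₗ[ℚ] V →ₗ[ℚ] ℚ) (hB : ∀ x y, B x y = B y x)
    (r : ℕ → ℚ) (c1 : ℕ → V) :
    ∀ n : ℕ, (∀ i < n, 0 < r i) →
      (∑ i ∈ Finset.range n, B (c1 i) (c1 i) / r i)
        - B (∑ j ∈ Finset.range n, c1 j) (∑ j ∈ Finset.range n, c1 j)
            / (∑ j ∈ Finset.range n, r j)
      = ∑ i ∈ Finset.Ico 1 n,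
          ((∑ j ∈ Finset.range (i+1), r j) * (∑ j ∈ Finset.range i, r j) / r i) *
            B ((∑ j ∈ Finset.range (i+1), r j)⁻¹ • ∑ j ∈ Finset.range (i+1), c1 j
                - (∑ j ∈ Finset.range i, r j)⁻¹ • ∑ j ∈ Finset.range i, c1 j)
              ((∑ j ∈ Finset.range (i+1), r j)⁻¹ • ∑ j ∈ Finset.range (i+1), c1 j
                - (∑ j ∈ Finset.range i, r j)⁻¹ • ∑ j ∈ Finset.range i, c1 j) := by
  intro n
  induction n with
  | zero => simp
  | succ m IH =>
    intro hr
    have hrm : ∀ i < m, 0 < r i := fun i hi => hr i (Nat.lt_succ_of_lt hi)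
    rcases Nat.eq_zero_or_pos m with hm | hm
    · subst hm; simp
    · have hIH := IH hrm
      rw [Finset.sum_range_succ, Finset.sum_range_succ (f := c1),
        Finset.sum_range_succ (f := r), Finset.sum_Ico_succ_top hm]
      have hρ : (0:ℚ) < r m := hr m (Nat.lt_succ_self m)
      have hR : (0:ℚ) < ∑ j ∈ Finset.range m, r j :=
        Finset.sum_pos (fun i hi => hrm i (Finset.mem_range.mp hi))
          (Finset.nonempty_range_iff.mpr (by omega))
      rw [← hIH]
      have := tele B hB (∑ j ∈ Finset.range m, r j) (r m)
        (∑ j ∈ Finset.range m, c1 j) (c1 m) hR.ne' hρ.ne' (by positivity)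
      rw [Finset.sum_range_succ (f := c1), Finset.sum_range_succ (f := r)]
      linarith [this]

/-- Discriminant formula for a filtration `0 ⊂ F₁ ⊂ ⋯ ⊂ F_ℓ = F` with quotients
`E_i = F_i/F_{i-1}` of positive rank on a smooth projective surface.  The second
cohomology `H²(S,ℚ)` is modeled by a ℚ-vector space `V` with the (symmetric)
intersection form `B`.  The quotient `E_i` (`i = 1,…,ℓ`, here indexed `0,…,ℓ-1`)
has rank `r i`, first Chern class `c1 i` and second Chern class `c2 i`; ranks and
Chern characters are additive, so `c₂(F)` is determined by `ch₂(F) = Σᵢ ch₂(Eᵢ)`.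
With `Δ(r,a,c) = (1/r)(c − ((r−1)/(2r)) a²)` and `μ(Fᵢ) = c₁(Fᵢ)/r(Fᵢ)`:
`Δ(F) = Σᵢ (r(Eᵢ)/r(F)) Δ(Eᵢ) − (1/(2r(F))) Σ_{i=2}^ℓ (r(Fᵢ)r(F_{i−1})/r(Eᵢ)) (μ(Fᵢ)−μ(F_{i−1}))²`. -/
theorem stmt1 (V : Type*) [AddCommGroup V] [Module ℚ V]
    (B : V →ₗ[ℚ] V →ₗ[ℚ] ℚ) (hB : ∀ x y, B x y = B y x)
    (ℓ : ℕ) (hℓ : 0 < ℓ)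
    (r : ℕ → ℚ) (c1 : ℕ → V) (c2 : ℕ → ℚ)
    (hr : ∀ i < ℓ, 0 < r i) :
    -- rank and first Chern class of `F_i` (partial sums over the first `i` quotients)
    let R : ℕ → ℚ := fun i => ∑ j ∈ Finset.range i, r j
    let C : ℕ → V := fun i => ∑ j ∈ Finset.range i, c1 j
    -- slope `μ(F_i) = c₁(F_i)/r(F_i) ∈ H²(S,ℚ)`
    let μ : ℕ → V := fun i => (R i)⁻¹ • C i
    -- discriminant `Δ` of a sheaf with rank `ρ`, first Chern class `a`, second Chern class `c`
    let Δ : ℚ → V → ℚ → ℚ := fun ρ a c => (1/ρ) * (c - ((ρ - 1)/(2*ρ)) * B a a)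
    -- `c₂(F)`, determined by additivity of the Chern character
    let c2F : ℚ := B (C ℓ) (C ℓ)/2 - ∑ i ∈ Finset.range ℓ, (B (c1 i) (c1 i)/2 - c2 i)
    Δ (R ℓ) (C ℓ) c2F =
      (∑ i ∈ Finset.range ℓ, (r i / R ℓ) * Δ (r i) (c1 i) (c2 i))
        - (1/(2 * R ℓ)) * ∑ i ∈ Finset.Ico 1 ℓ,
            (R (i+1) * R i / r i) * B (μ (i+1) - μ i) (μ (i+1) - μ i) := by
  intro R C μ Δ c2F
  have hkey := key B hB r c1 ℓ hr
  have hR : (0:ℚ) < R ℓ :=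
    Finset.sum_pos (fun i hi => hr i (Finset.mem_range.mp hi))
      (Finset.nonempty_range_iff.mpr hℓ.ne')
  have hμsum : ∑ i ∈ Finset.Ico 1 ℓ,
      (R (i+1) * R i / r i) * B (μ (i+1) - μ i) (μ (i+1) - μ i)
      = (∑ i ∈ Finset.range ℓ, B (c1 i) (c1 i) / r i) - B (C ℓ) (C ℓ) / R ℓ := by
    rw [← hkey]
  rw [hμsum]
  have hterm : ∀ i ∈ Finset.range ℓ,
      (r i / R ℓ) * Δ (r i) (c1 i) (c2 i)
      = (1 / R ℓ) * (c2 i - B (c1 i) (c1 i) / 2)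
          + (1 / (2 * R ℓ)) * (B (c1 i) (c1 i) / r i) := by
    intro i hi
    have hri : r i ≠ 0 := (hr i (Finset.mem_range.mp hi)).ne'
    simp only [Δ]
    field_simp
    ring
  rw [Finset.sum_congr rfl hterm, Finset.sum_add_distrib, ← Finset.mul_sum, ← Finset.mul_sum]
  simp only [Δ, c2F]
  have h2 : ∑ i ∈ Finset.range ℓ, (B (c1 i) (c1 i) / 2 - c2 i)
      = - ∑ i ∈ Finset.range ℓ, (c2 i - B (c1 i) (c1 i) / 2) := by
    rw [← Finset.sum_neg_distrib]
    exact Finset.sum_congr rfl fun i _ => by ring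
  rw [h2]
  have hRne : R ℓ ≠ 0 := hR.ne'
  field_simp
  ring
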